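/- arXiv:1710.07060 — 2 statements merged into one kernel-verified Lean document; each statement's English description precedes it below -/
import Mathlib

section
/- Let μ be a geodesic current on a complete finite-area hyperbolic surface Σ = Γ\H², let Λ̃ ⊂ H² be a Γ-invariant lamination consisting of μ-somewhat short geodesics, and let γ ∈ Γ be a hyperbolic element such that the axis (γ₋, γ₊) is the limit of geodesics (x₋ₙ, xₙ) where …, x₋₁, x₀, x₁, … are the consecutive ideal vertices of a complementary region (crown) of Λ̃, with each (x₋ₙ, xₙ) μ-somewhat short. Then (γ₋, γ₊) is μ-somewhat short. -/
/-!
The somewhat short pairs form a closed set. Strict betweenness on the circle is an open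
condition, so a compact set inside `]a,b[ × ]b,a[` stays inside `]a',b'[ × ]b',a'[` for all
`(a',b')` near `(a,b)`; by inner regularity a positive mass of the open set `]a,b[ × ]b,a[` is
already carried by such a compact set, so positivity of that mass is an open condition.
-/

open MeasureTheory Set ENNReal Filter

instance : Fact ((0:ℝ) < 1) := ⟨one_pos⟩

/-- The circle `∂H² = S¹`, as `ℝ/ℤ`. -/
abbrev Circ := AddCircle (1 : ℝ)

/-- The open arc `]a,b[` on a circularly ordered set. -/
def oarc {S : Type*} [CircularOrder S] (a b : S) : Set S := {x | sbtw a x b}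

/-- `(a,b)` is `μ`-somewhat short. -/
def SomewhatShort (μ : Measure (Circ × Circ)) (a b : Circ) : Prop :=
  μ ((oarc a b) ×ˢ (oarc b a)) = 0

open Topology

namespace AddCircle

variable {𝕜 : Type*} [Field 𝕜] [LinearOrder 𝕜] [IsStrictOrderedRing 𝕜] [Archimedean 𝕜]
  {p : 𝕜} [Fact (0 < p)]

theorem sbtw_coe_of_lt {r s t : 𝕜} (hrs : r < s) (hst : s < t) (htr : t < r + p) :
    sbtw (r : AddCircle p) s t := by
  have hp : (0 : 𝕜) < p := Fact.out
  have hs : toIcoMod hp t s = s + p := by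
    rw [← toIcoMod_add_right hp]
    exact (toIcoMod_eq_self hp).2 ⟨by linarith, by linarith⟩
  have hr : toIocMod hp t r = r + p := by
    rw [← toIocMod_add_right hp]
    exact (toIocMod_eq_self hp).2 ⟨by linarith, by linarith⟩
  rw [sbtw_iff_not_btw, QuotientAddGroup.btw_coe_iff, hs, hr, not_le]
  linarith

theorem exists_lt_lift_of_sbtw {a x b : AddCircle p} (h : sbtw a x b) :
    ∃ r s t : 𝕜, r < s ∧ s < t ∧ t < r + p ∧ (r : AddCircle p) = a ∧ (s : AddCircle p) = x ∧
      (t : AddCircle p) = b := by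
  obtain ⟨r, rfl⟩ := QuotientAddGroup.mk_surjective a
  have hIco (y : AddCircle p) : y ∈ ((↑) : 𝕜 → AddCircle p) '' Ico r (r + p) := by
    rw [coe_image_Ico_eq]; trivial
  obtain ⟨s, ⟨hrs₀, hsr⟩, rfl⟩ := hIco x
  obtain ⟨t, ⟨hrt₀, htr⟩, rfl⟩ := hIco b
  have hrs : r < s := hrs₀.lt_of_ne fun h' => sbtw_irrefl_left (h' ▸ h)
  have hrt : r < t := hrt₀.lt_of_ne fun h' => sbtw_irrefl_left_right (h' ▸ h)
  refine ⟨r, s, t, hrs, ?_, htr, rfl, rfl, rfl⟩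
  rcases lt_trichotomy s t with hst | rfl | hts
  · exact hst
  · exact (sbtw_irrefl_right h).elim
  · exact (h.not_btw (sbtw_coe_of_lt hrt hts hsr).cyclic_left.btw).elim

variable [TopologicalSpace 𝕜] [OrderTopology 𝕜]

theorem isOpen_setOf_sbtw :
    IsOpen {q : AddCircle p × AddCircle p × AddCircle p | sbtw q.1 q.2.1 q.2.2} := by
  rw [isOpen_iff_forall_mem_open]
  rintro ⟨a, x, b⟩ h
  obtain ⟨r, s, t, hrs, hst, htr, rfl, rfl, rfl⟩ := exists_lt_lift_of_sbtw h
  let π : 𝕜 × 𝕜 × 𝕜 → AddCircle p × AddCircle p × AddCircle p :=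
    Prod.map (↑) (Prod.map (↑) (↑))
  have hπ : IsOpenMap π := QuotientAddGroup.isOpenMap_coe.prodMap
    (QuotientAddGroup.isOpenMap_coe.prodMap QuotientAddGroup.isOpenMap_coe)
  let V : Set (𝕜 × 𝕜 × 𝕜) := {q | q.1 < q.2.1 ∧ q.2.1 < q.2.2 ∧ q.2.2 < q.1 + p}
  have hV : IsOpen V :=
    (isOpen_lt (by fun_prop) (by fun_prop)).inter
      ((isOpen_lt (by fun_prop) (by fun_prop)).inter (isOpen_lt (by fun_prop) (by fun_prop)))
  refine ⟨π '' V, ?_, hπ V hV, mem_image_of_mem π (show (r, s, t) ∈ V from ⟨hrs, hst, htr⟩)⟩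
  rintro _ ⟨q, ⟨h₁, h₂, h₃⟩, rfl⟩
  exact sbtw_coe_of_lt h₁ h₂ h₃

theorem isOpen_oarc (a b : AddCircle p) : IsOpen (oarc a b) :=
  isOpen_setOf_sbtw.preimage (by fun_prop : Continuous fun y => (a, y, b))

theorem eventually_subset_oarc_prod_oarc {a b : AddCircle p}
    {K : Set (AddCircle p × AddCircle p)} (hK : IsCompact K) (hKab : K ⊆ oarc a b ×ˢ oarc b a) :
    ∀ᶠ q in 𝓝 (a, b), K ⊆ oarc q.1 q.2 ×ˢ oarc q.2 q.1 := by
  have hW : IsOpen {z : (AddCircle p × AddCircle p) × (AddCircle p × AddCircle p) |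
      sbtw z.1.1 z.2.1 z.1.2 ∧ sbtw z.1.2 z.2.2 z.1.1} :=
    (isOpen_setOf_sbtw.preimage (continuous_fst.fst.prodMk
      (continuous_snd.fst.prodMk continuous_fst.snd))).inter
    (isOpen_setOf_sbtw.preimage (continuous_fst.snd.prodMk
      (continuous_snd.snd.prodMk continuous_fst.fst)))
  exact hK.eventually_forall_of_forall_eventually fun y hy => hW.mem_nhds (hKab hy)

end AddCircle

theorem isClosed_setOf_somewhatShort (μ : Measure (Circ × Circ)) [μ.InnerRegular] :
    IsClosed {q : Circ × Circ | SomewhatShort μ q.1 q.2} := by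
  refine isOpen_compl_iff.1 (isOpen_iff_mem_nhds.2 fun q hq => ?_)
  have hU : MeasurableSet (oarc q.1 q.2 ×ˢ oarc q.2 q.1) :=
    ((AddCircle.isOpen_oarc _ _).prod (AddCircle.isOpen_oarc _ _)).measurableSet
  obtain ⟨K, hKU, hK, hμK⟩ := hU.exists_lt_isCompact (pos_iff_ne_zero.2 hq)
  filter_upwards [AddCircle.eventually_subset_oarc_prod_oarc hK hKU] with q' hKq'
  exact (hμK.trans_le (measure_mono hKq')).ne'

theorem crown_boundary_somewhat_short_general
    (μ : Measure (Circ × Circ)) [μ.InnerRegular]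
    (x : ℤ → Circ) (gm gp : Circ)
    (hss : ∀ n : ℕ, SomewhatShort μ (x (-(n : ℤ))) (x (n : ℤ)))
    (hlim : Tendsto (fun n : ℕ => (x (-(n : ℤ)), x (n : ℤ))) atTop
      (nhds (gm, gp))) :
    SomewhatShort μ gm gp :=
  (isClosed_setOf_somewhatShort μ).mem_of_tendsto hlim (Eventually.of_forall hss)

/-- crown boundary is somewhat short: let `x : ℤ → Circ` enumerate the
consecutive ideal vertices of a complementary region (crown) of a lamination of
`μ`-somewhat short geodesics, so that each diagonal `(x₋ₙ, xₙ)` is `μ`-somewhat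
short, and suppose `(γ₋, γ₊) = lim (x₋ₙ, xₙ)`. Then `(γ₋, γ₊)` is `μ`-somewhat
short. -/
theorem crown_boundary_somewhat_short
    (μ : Measure (Circ × Circ)) [IsFiniteMeasureOnCompacts μ] [μ.InnerRegular]
    (x : ℤ → Circ) (gm gp : Circ) (hne : gm ≠ gp)
    (hss : ∀ n : ℕ, SomewhatShort μ (x (-(n : ℤ))) (x (n : ℤ)))
    (hlim : Tendsto (fun n : ℕ => (x (-(n : ℤ)), x (n : ℤ))) atTop
      (nhds (gm, gp))) :
    SomewhatShort μ gm gp :=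
  crown_boundary_somewhat_short_general μ x gm gp hss hlim
end

section
/- Let S¹ carry a cyclic order and let a, b be distinct points such that (a,b) is μ-somewhat short for a Radon measure μ on pairs of distinct points, and suppose for every positively oriented 4-tuple (γ₋, x, y, γ₊) there exist points p, q with (γ₋, p, x, y, q, γ₊) positively oriented and (p,q) μ-somewhat short. Then μ(]γ₋,γ₊[ × ]γ₊,γ₋[) = 0, i.e. (γ₋,γ₊) is μ-somewhat short. -/
open MeasureTheory Set ENNReal

/-- `(x₁,x₂,x₃,x₄)` is a positively oriented 4-tuple. -/
def Pos4 {S : Type*} [CircularOrder S] (x₁ x₂ x₃ x₄ : S) : Prop :=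
  sbtw x₁ x₂ x₃ ∧ sbtw x₂ x₃ x₄ ∧ sbtw x₃ x₄ x₁ ∧ sbtw x₄ x₁ x₂

lemma coe_toIocMod' (g x : ℝ) : ((toIocMod one_pos g x : ℝ) : Circ) = (x : Circ) := by
  rw [QuotientAddGroup.eq, toIocMod]
  have : (toIocDiv one_pos g x) • (1:ℝ) ∈ AddSubgroup.zmultiples (1:ℝ) :=
    AddSubgroup.zsmul_mem _ (AddSubgroup.mem_zmultiples 1) _
  convert this using 1
  ring

lemma exists_rep (g : ℝ) (z : Circ) : ∃ r : ℝ, r ∈ Set.Ioc g (g+1) ∧ (r : Circ) = z := by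
  obtain ⟨x, rfl⟩ := QuotientAddGroup.mk_surjective z
  exact ⟨toIocMod one_pos g x, toIocMod_mem_Ioc one_pos g x, coe_toIocMod' g x⟩

lemma sbtw_coe_of {u v w : ℝ} (h1 : u < v) (h2 : v < w) (h3 : w < u + 1) :
    sbtw (u : Circ) (v : Circ) (w : Circ) := by
  constructor
  · rw [QuotientAddGroup.btw_coe_iff,
      (toIcoMod_eq_self _).mpr ⟨h1.le, by linarith⟩,
      (toIocMod_eq_self _).mpr ⟨h1.trans h2, by linarith⟩]
    exact h2.le
  · rw [QuotientAddGroup.btw_coe_iff]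
    have e1 : toIcoMod (Fact.out : (0:ℝ) < 1) w v = v + 1 := by
      rw [← toIcoMod_add_right, (toIcoMod_eq_self _).mpr ⟨by linarith, by linarith⟩]
    have e2 : toIocMod (Fact.out : (0:ℝ) < 1) w u = u + 1 := by
      rw [← toIocMod_add_right, (toIocMod_eq_self _).mpr ⟨by linarith, by linarith⟩]
    rw [e1, e2]
    push_neg
    linarith

/-- cyclic order predicate on reals -/
def Dc (a b c : ℝ) : Prop := (a < b ∧ b < c) ∨ (b < c ∧ c < a) ∨ (c < a ∧ a < b)

lemma sbtw_coe_iff {g a b c : ℝ} (ha : a ∈ Set.Ioc g (g+1)) (hb : b ∈ Set.Ioc g (g+1))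
    (hc : c ∈ Set.Ioc g (g+1)) :
    sbtw (a : Circ) (b : Circ) (c : Circ) ↔ Dc a b c := by
  obtain ⟨ha1, ha2⟩ := ha; obtain ⟨hb1, hb2⟩ := hb; obtain ⟨hc1, hc2⟩ := hc
  constructor
  · intro hs
    rcases lt_trichotomy a b with hab | hab | hab
    · rcases lt_trichotomy b c with hbc | hbc | hbc
      · exact Or.inl ⟨hab, hbc⟩
      · exact absurd (hbc ▸ hs) sbtw_irrefl_right
      · rcases lt_trichotomy a c with hac | hac | hac
        · exact absurd hs.cyclic_left (sbtw_asymm (sbtw_coe_of hac hbc (by linarith)))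
        · exact absurd (show sbtw (a:Circ) b (a:Circ) from hac ▸ hs) sbtw_irrefl_left_right
        · exact Or.inr (Or.inr ⟨hac, hab⟩)
    · exact absurd (hab ▸ hs) sbtw_irrefl_left
    · rcases lt_trichotomy b c with hbc | hbc | hbc
      · rcases lt_trichotomy a c with hac | hac | hac
        · exact absurd hs.cyclic_left.cyclic_left
            (sbtw_asymm (sbtw_coe_of hab hac (by linarith)))
        · exact absurd (show sbtw (a:Circ) b (a:Circ) from hac ▸ hs) sbtw_irrefl_left_right
        · exact Or.inr (Or.inl ⟨hbc, hac⟩)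
      · exact absurd (hbc ▸ hs) sbtw_irrefl_right
      · exact absurd hs (sbtw_asymm (sbtw_coe_of hbc hab (by linarith)))
  · rintro (⟨h1, h2⟩ | ⟨h1, h2⟩ | ⟨h1, h2⟩)
    · exact sbtw_coe_of h1 h2 (by linarith)
    · exact (sbtw_coe_of h1 h2 (by linarith)).cyclic_left.cyclic_left
    · exact (sbtw_coe_of h1 h2 (by linarith)).cyclic_left

/-- suppose `(a,b)` is `μ`-somewhat short for distinct `a, b`, and for
every positively oriented 4-tuple `(γ₋, x, y, γ₊)` there are points `p, q` with
`(γ₋, p, x, y, q, γ₊)` positively oriented and `(p,q)` `μ`-somewhat short. Then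
`(γ₋, γ₊)` is `μ`-somewhat short. -/
theorem somewhat_short_limit_axis
    (μ : Measure (Circ × Circ))
    (hflip : ∀ A B : Set Circ, μ (A ×ˢ B) = μ (B ×ˢ A))
    (a b gm gp : Circ) (hab : a ≠ b) (hssab : SomewhatShort μ a b)
    (hne : gm ≠ gp)
    (h : ∀ x y : Circ, Pos4 gm x y gp →
      ∃ p q : Circ,
        (sbtw gm p x ∧ sbtw p x y ∧ sbtw x y q ∧ sbtw y q gp ∧ sbtw q gp gm ∧
          sbtw gp gm p) ∧ SomewhatShort μ p q) :
    SomewhatShort μ gm gp := by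
  obtain ⟨g, -, hgm⟩ := exists_rep 0 gm
  obtain ⟨t, ht, hgp⟩ := exists_rep g gp
  set d : ℝ := t - g with hdd
  have hgpd : ((g + d : ℝ) : Circ) = gp := by rw [show g + d = t by rw [hdd]; ring]; exact hgp
  have hgm1 : ((g + 1 : ℝ) : Circ) = gm := by rw [AddCircle.coe_add_period]; exact hgm
  have hd1 : 0 < d := by simp only [hdd]; linarith [ht.1]
  have hd2 : d < 1 := by
    rcases lt_or_eq_of_le ht.2 with h' | h'
    · simp only [hdd]; linarith
    · exfalso; apply hne
      rw [← hgm1, ← hgp, h']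
  -- the exhausting arcs
  set ε : ℕ → ℝ := fun n => d / (n + 3) with hεd
  have hε1 : ∀ n, 0 < ε n := fun n => by positivity
  have hε2 : ∀ n, 3 * ε n ≤ d := by
    intro n
    rw [hεd]
    rw [mul_comm, ← le_div_iff₀ (by norm_num : (0:ℝ) < 3)]
    apply div_le_div_of_nonneg_left hd1.le (by norm_num)
    have : (0:ℝ) ≤ n := Nat.cast_nonneg n
    linarith
  have hmemx : ∀ n, g + ε n ∈ Set.Ioc g (g+1) := fun n =>
    ⟨by linarith [hε1 n], by linarith [hε1 n, hε2 n]⟩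
  have hmemy : ∀ n, g + d - ε n ∈ Set.Ioc g (g+1) := fun n =>
    ⟨by linarith [hε1 n, hε2 n], by linarith [hε1 n]⟩
  have hmemgp : g + d ∈ Set.Ioc g (g+1) := ⟨by linarith, by linarith⟩
  have hmemgm : g + 1 ∈ Set.Ioc g (g+1) := ⟨by linarith, le_refl _⟩
  -- main argument
  apply measure_mono_null
    (t := ⋃ n : ℕ, (oarc ((g + ε n : ℝ) : Circ) ((g + d - ε n : ℝ) : Circ)) ×ˢ (oarc gp gm))
  · rintro ⟨z, w⟩ ⟨hz, hw⟩
    obtain ⟨r, hr, hrz⟩ := exists_rep g z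
    have hz' : sbtw ((g+1 : ℝ) : Circ) ((r : ℝ) : Circ) ((g + d : ℝ) : Circ) := by
      rw [hgm1, hrz, hgpd]; exact hz
    have hD := (sbtw_coe_iff hmemgm hr hmemgp).mp hz'
    have hrb : g < r ∧ r < g + d := by
      rcases hD with ⟨h1, h2⟩ | ⟨h1, h2⟩ | ⟨h1, h2⟩
      · exact absurd h1 (by linarith [hr.2])
      · exact ⟨hr.1, h1⟩
      · exact absurd h2 (by linarith [hr.2])
    set m : ℝ := min (r - g) (g + d - r) with hm
    have hm0 : 0 < m := lt_min (by linarith [hrb.1]) (by linarith [hrb.2])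
    obtain ⟨n, hn⟩ := exists_nat_gt (d / m)
    have hεm : ε n < m := by
      rw [hεd, div_lt_iff₀ (by positivity : (0:ℝ) < (n:ℝ) + 3)]
      rw [div_lt_iff₀ hm0] at hn
      nlinarith
    refine Set.mem_iUnion.mpr ⟨n, ⟨?_, hw⟩⟩
    show sbtw _ z _
    rw [← hrz]
    refine (sbtw_coe_iff (hmemx n) hr (hmemy n)).mpr (Or.inl ⟨?_, ?_⟩)
    · have := min_le_left (r - g) (g + d - r); rw [← hm] at this; linarith
    · have := min_le_right (r - g) (g + d - r); rw [← hm] at this; linarith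
  · refine measure_iUnion_null fun n => ?_
    have hPos : Pos4 gm ((g + ε n : ℝ) : Circ) ((g + d - ε n : ℝ) : Circ) gp := by
      refine ⟨?_, ?_, ?_, ?_⟩
      · rw [← hgm]
        exact sbtw_coe_of (by linarith [hε1 n]) (by linarith [hε1 n, hε2 n]) (by linarith [hε1 n])
      · rw [← hgpd]
        exact sbtw_coe_of (by linarith [hε1 n, hε2 n]) (by linarith [hε1 n])
          (by linarith [hε1 n])
      · rw [← hgpd, ← hgm1]
        exact sbtw_coe_of (by linarith [hε1 n]) (by linarith) (by linarith [hε1 n, hε2 n])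
      · rw [← hgpd, ← hgm1,
          show ((g + ε n : ℝ) : Circ) = ((g + 1 + ε n : ℝ) : Circ) by
            rw [show (g + 1 + ε n : ℝ) = (g + ε n) + 1 by ring, AddCircle.coe_add_period]]
        exact sbtw_coe_of (by linarith) (by linarith [hε1 n]) (by linarith [hε1 n, hε2 n])
    obtain ⟨p, q, ⟨H1, H2, H3, H4, H5, H6⟩, hpq⟩ :=
      h ((g + ε n : ℝ) : Circ) ((g + d - ε n : ℝ) : Circ) hPos
    refine measure_mono_null (Set.prod_mono ?_ ?_) hpq
    · -- oarc x y ⊆ oarc p q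
      obtain ⟨rp, hrp, hrpe⟩ := exists_rep g p
      obtain ⟨rq, hrq, hrqe⟩ := exists_rep g q
      have H1' : Dc (g+1) rp (g + ε n) := by
        refine (sbtw_coe_iff hmemgm hrp (hmemx n)).mp ?_
        rw [hgm1, hrpe]; exact H1
      have H4' : Dc (g + d - ε n) rq (g + d) := by
        refine (sbtw_coe_iff (hmemy n) hrq hmemgp).mp ?_
        rw [hrqe, hgpd]; exact H4
      have hrpb : rp < g + ε n := by
        rcases H1' with ⟨h1, h2⟩ | ⟨h1, h2⟩ | ⟨h1, h2⟩
        · exact absurd h1 (by linarith [hrp.2])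
        · exact h1
        · exact absurd h2 (by linarith [hrp.2])
      have hrqb : g + d - ε n < rq ∧ rq < g + d := by
        rcases H4' with ⟨h1, h2⟩ | ⟨h1, h2⟩ | ⟨h1, h2⟩
        · exact ⟨h1, h2⟩
        · exact absurd h2 (by linarith [hε1 n])
        · exact absurd h1 (by linarith [hε1 n])
      intro z hz
      obtain ⟨rz, hrz, hrze⟩ := exists_rep g z
      have hz' : sbtw ((g + ε n : ℝ) : Circ) ((rz : ℝ) : Circ) ((g + d - ε n : ℝ) : Circ) := by
        rw [hrze]; exact hz
      have hDz := (sbtw_coe_iff (hmemx n) hrz (hmemy n)).mp hz'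
      have hrzb : g + ε n < rz ∧ rz < g + d - ε n := by
        rcases hDz with ⟨h1, h2⟩ | ⟨h1, h2⟩ | ⟨h1, h2⟩
        · exact ⟨h1, h2⟩
        · exact absurd h2 (by linarith [hε1 n, hε2 n])
        · exact absurd h1 (by linarith [hε1 n, hε2 n])
      show sbtw p z q
      rw [← hrpe, ← hrqe, ← hrze]
      exact (sbtw_coe_iff hrp hrz hrq).mpr
        (Or.inl ⟨by linarith [hrzb.1], by linarith [hrzb.2, hrqb.1]⟩)
    · -- oarc gp gm ⊆ oarc q p
      obtain ⟨rp, hrp, hrpe⟩ := exists_rep g p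
      obtain ⟨rq, hrq, hrqe⟩ := exists_rep g q
      have H1' : Dc (g+1) rp (g + ε n) := by
        refine (sbtw_coe_iff hmemgm hrp (hmemx n)).mp ?_
        rw [hgm1, hrpe]; exact H1
      have H4' : Dc (g + d - ε n) rq (g + d) := by
        refine (sbtw_coe_iff (hmemy n) hrq hmemgp).mp ?_
        rw [hrqe, hgpd]; exact H4
      have hrpb : rp < g + ε n := by
        rcases H1' with ⟨h1, h2⟩ | ⟨h1, h2⟩ | ⟨h1, h2⟩
        · exact absurd h1 (by linarith [hrp.2])
        · exact h1
        · exact absurd h2 (by linarith [hrp.2])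
      have hrqb : g + d - ε n < rq ∧ rq < g + d := by
        rcases H4' with ⟨h1, h2⟩ | ⟨h1, h2⟩ | ⟨h1, h2⟩
        · exact ⟨h1, h2⟩
        · exact absurd h2 (by linarith [hε1 n])
        · exact absurd h1 (by linarith [hε1 n])
      intro z hz
      obtain ⟨rz, hrz, hrze⟩ := exists_rep g z
      have hz' : sbtw ((g + d : ℝ) : Circ) ((rz : ℝ) : Circ) ((g + 1 : ℝ) : Circ) := by
        rw [hrze, hgpd, hgm1]; exact hz
      have hDz := (sbtw_coe_iff hmemgp hrz hmemgm).mp hz'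
      have hrzb : g + d < rz ∧ rz < g + 1 := by
        rcases hDz with ⟨h1, h2⟩ | ⟨h1, h2⟩ | ⟨h1, h2⟩
        · exact ⟨h1, h2⟩
        · exact absurd h2 (by linarith)
        · exact absurd h1 (by linarith)
      show sbtw q z p
      rw [← hrpe, ← hrqe, ← hrze]
      exact (sbtw_coe_iff hrq hrz hrp).mpr
        (Or.inr (Or.inr ⟨by linarith [hrqb.1, hε1 n, hε2 n],
          by linarith [hrqb.2, hrzb.1]⟩))
end
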